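/- arXiv:1507.07860 — 2 statements merged into one kernel-verified Lean document; each statement's English description precedes it below -/
import Mathlib

section
/- Let A be an n×n irreducible nonnegative symmetric real matrix. The following are equivalent: (i) there exists a real skew-symmetric matrix B with |B| = A and sp(B) = i·sp(A); (ii) there exists a permutation matrix P such that PAP^T has the block form [[0, X],[X^T, 0]] where the two zero diagonal blocks are square. -/
open Matrix

/-- The spectrum of a real square matrix: the multiset of complex roots of its
characteristic polynomial (eigenvalues with multiplicity). -/
noncomputable def spec {ι : Type*} [Fintype ι] [DecidableEq ι] (M : Matrix ι ι ℝ) : Multiset ℂ :=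
  (M.map Complex.ofReal).charpoly.roots

/-- The spectral radius: the maximum of the moduli of the complex eigenvalues. -/
noncomputable def specRadius {ι : Type*} [Fintype ι] [DecidableEq ι] (M : Matrix ι ι ℝ) : ℝ :=
  sSup ((fun z : ℂ => ‖z‖) '' {z | z ∈ spec M})

/-- Entrywise absolute value of a real matrix. -/
def matAbs {ι : Type*} (M : Matrix ι ι ℝ) : Matrix ι ι ℝ := fun i j => |M i j|

/-- A walk of length `k` from `i` to `j` in the digraph of `A`
(arcs are the pairs with nonzero entry). -/
def HasWalk {ι : Type*} (A : Matrix ι ι ℝ) (i j : ι) (k : ℕ) : Prop :=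
  ∃ f : ℕ → ι, f 0 = i ∧ f k = j ∧ ∀ t < k, A (f t) (f (t + 1)) ≠ 0

/-- `A` is irreducible: its digraph is strongly connected. -/
def MatIrreducible {ι : Type*} (A : Matrix ι ι ℝ) : Prop :=
  ∀ i j : ι, ∃ k, HasWalk A i j k

/-- `p` is the period of `A`: the gcd of the lengths of the closed walks of its digraph. -/
def IsPeriod {ι : Type*} (A : Matrix ι ι ℝ) (p : ℕ) : Prop :=
  (∀ k, 0 < k → (∃ i, HasWalk A i i k) → p ∣ k) ∧
  ∀ q : ℕ, (∀ k, 0 < k → (∃ i, HasWalk A i i k) → q ∣ k) → q ∣ p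

/-- `B'` is `{-1,1}`-diagonally similar to `B`:
`B' = Λ⁻¹ * B * Λ` for a diagonal matrix `Λ` with diagonal entries in `{-1,1}`. -/
def DiagSignSimilar {ι : Type*} [Fintype ι] [DecidableEq ι] (B B' : Matrix ι ι ℝ) : Prop :=
  ∃ d : ι → ℝ, (∀ i, d i = 1 ∨ d i = -1) ∧
    B' = (Matrix.diagonal d)⁻¹ * B * Matrix.diagonal d

/-!
If `B` is real skew-symmetric then `tr (B ^ k) = 0` for odd `k`, while `sp B = i • sp A` gives
`tr (B ^ k) = i ^ k * tr (A ^ k)` (traces of powers are power sums of eigenvalues, which the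
spectral theorem provides for both matrices); so `tr (A ^ k) = 0` for every odd `k`. Since
`A ≥ 0`, this says that the digraph of `A` has no closed walk of odd length, and, being strongly
connected, it is two-coloured by the parity of the lengths of walks from a fixed vertex: this is
the block form. Conversely, given such a two-colouring, changing the sign of the rows of one colour
class yields a skew-symmetric `B` with `|B| = A`, and conjugating `B` by the diagonal matrix with
entries `1` and `i` on the two classes gives `i • A`.
-/

namespace Matrix.IsHermitian

open Polynomial

variable {ι : Type*} [Fintype ι] [DecidableEq ι] {H : Matrix ι ι ℂ}

theorem charpoly_smul_pow (hH : H.IsHermitian) (c : ℂ) (k : ℕ) :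
    ((c • H) ^ k).charpoly = ∏ i, (X - C ((c * hH.eigenvalues i) ^ k)) := by
  conv_lhs => rw [hH.spectral_theorem, ← map_smul, ← map_pow, Unitary.conjStarAlgAut_apply,
    charpoly_mul_comm, ← mul_assoc]
  rw [Unitary.coe_star_mul_self, one_mul, ← diagonal_smul, diagonal_pow, charpoly_diagonal]
  rfl

theorem roots_charpoly_smul_pow (hH : H.IsHermitian) (c : ℂ) (k : ℕ) :
    ((c • H) ^ k).charpoly.roots = Finset.univ.val.map fun i ↦ (c * hH.eigenvalues i) ^ k := by
  rw [hH.charpoly_smul_pow,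
    roots_prod _ _ (Finset.prod_ne_zero_iff.mpr fun i _ ↦ X_sub_C_ne_zero _)]
  simp only [roots_X_sub_C, Multiset.bind_singleton]

theorem roots_charpoly_smul (hH : H.IsHermitian) (c : ℂ) :
    (c • H).charpoly.roots = H.charpoly.roots.map (c * ·) := by
  have hc := hH.roots_charpoly_smul_pow c 1
  have h1 := hH.roots_charpoly_smul_pow 1 1
  simp only [pow_one, one_smul, one_mul] at hc h1
  rw [hc, h1, Multiset.map_map]
  rfl

theorem trace_smul_pow (hH : H.IsHermitian) (c : ℂ) (k : ℕ) :
    ((c • H) ^ k).trace = ((c • H).charpoly.roots.map (· ^ k)).sum := by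
  have h := hH.roots_charpoly_smul_pow c
  rw [trace_eq_sum_roots_charpoly, h, ← pow_one (c • H), h, Multiset.map_map]
  simp only [Function.comp_def, pow_one]

end Matrix.IsHermitian

section RealSpectrum

variable {ι : Type*}

theorem isHermitian_map_ofReal_of_transpose_eq {A : Matrix ι ι ℝ} (hA : Aᵀ = A) :
    (A.map Complex.ofReal).IsHermitian :=
  (isHermitian_map_iff (fun _ ↦ (Complex.conj_ofReal _).symm) Complex.ofReal_injective).mpr hA

theorem isHermitian_I_smul_map_ofReal_of_transpose_eq_neg {B : Matrix ι ι ℝ} (hB : Bᵀ = -B) :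
    (Complex.I • B.map Complex.ofReal).IsHermitian := by
  ext i j
  have hji : B j i = -B i j := by simpa using congrFun (congrFun hB i) j
  simp [hji]

variable [Fintype ι] [DecidableEq ι]

theorem trace_pow_eq_zero_of_transpose_eq_neg {R : Type*} [CommRing R] [IsAddTorsionFree R]
    {B : Matrix ι ι R} (hB : Bᵀ = -B) {k : ℕ} (hk : Odd k) : (B ^ k).trace = 0 := by
  rw [← neg_eq_self, ← trace_neg, ← hk.neg_pow, ← hB, ← transpose_pow, trace_transpose]

theorem trace_pow_eq_sum_spec_pow {M : Matrix ι ι ℝ} {c : ℂ} (hc : c ≠ 0)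
    (hM : (c • M.map Complex.ofReal).IsHermitian) (k : ℕ) :
    ((M ^ k).trace : ℂ) = ((spec M).map (· ^ k)).sum := by
  have htr : ((M ^ k).trace : ℂ) = ((M ^ k).map Complex.ofReal).trace :=
    AddMonoidHom.map_trace Complex.ofRealHom _
  have hpow : (M ^ k).map Complex.ofReal = (M.map Complex.ofReal) ^ k :=
    Matrix.map_pow M Complex.ofRealHom k
  have hcM : M.map Complex.ofReal = c⁻¹ • c • M.map Complex.ofReal := by
    rw [smul_smul, inv_mul_cancel₀ hc, one_smul]
  rw [spec, htr, hpow, hcM]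
  exact hM.trace_smul_pow c⁻¹ k

theorem trace_pow_eq_zero_of_spec_eq_I_smul {A B : Matrix ι ι ℝ} (hA : Aᵀ = A)
    (hB : Bᵀ = -B) (hspec : spec B = (spec A).map (Complex.I * ·)) {k : ℕ} (hk : Odd k) :
    (A ^ k).trace = 0 := by
  have hBA : ((B ^ k).trace : ℂ) = Complex.I ^ k * (A ^ k).trace := by
    rw [trace_pow_eq_sum_spec_pow Complex.I_ne_zero
        (isHermitian_I_smul_map_ofReal_of_transpose_eq_neg hB),
      trace_pow_eq_sum_spec_pow one_ne_zero
        (by simpa using isHermitian_map_ofReal_of_transpose_eq hA),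
      hspec, Multiset.map_map, ← Multiset.sum_map_mul_left]
    simp only [Function.comp_def, mul_pow]
  rw [trace_pow_eq_zero_of_transpose_eq_neg hB hk, Complex.ofReal_zero, eq_comm,
    mul_eq_zero] at hBA
  exact_mod_cast hBA.resolve_left (pow_ne_zero _ Complex.I_ne_zero)

end RealSpectrum

def IsTwoColoring {ι R : Type*} [Zero R] (A : Matrix ι ι R) (c : ι → Bool) : Prop :=
  ∀ i j, A i j ≠ 0 → c i ≠ c j

section BlockForm

variable {ι R : Type*}

theorem IsTwoColoring.of_submatrix_eq_fromBlocks [Zero R] {κ₁ κ₂ : Type*} {A : Matrix ι ι R}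
    (τ : κ₁ ⊕ κ₂ ≃ ι) {X : Matrix κ₁ κ₂ R} {Y : Matrix κ₂ κ₁ R}
    (h : A.submatrix τ τ = fromBlocks 0 X Y 0) :
    IsTwoColoring A fun i ↦ (τ.symm i).isLeft := by
  rintro i j hij
  obtain ⟨x, rfl⟩ := τ.surjective i
  obtain ⟨y, rfl⟩ := τ.surjective j
  have hxy : fromBlocks 0 X Y 0 x y ≠ 0 := by rwa [← h]
  simp only [Equiv.symm_apply_apply]
  rcases x with a | a <;> rcases y with b | b <;> simp_all

theorem IsTwoColoring.exists_submatrix_eq_fromBlocks [Zero R] [Fintype ι] {A : Matrix ι ι R}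
    {c : ι → Bool} (hA : Aᵀ = A) (hc : IsTwoColoring A c) :
    ∃ (m l : ℕ) (τ : Fin m ⊕ Fin l ≃ ι) (X : Matrix (Fin m) (Fin l) R),
      A.submatrix τ τ = fromBlocks 0 X Xᵀ 0 := by
  let τ := ((Fintype.equivFin {i // c i}).symm.sumCongr
    (Fintype.equivFin {i // ¬ c i}).symm).trans (Equiv.sumCompl fun i ↦ c i)
  have hτ : ∀ x, c (τ x) = x.isLeft := by
    rintro (a | a)
    · exact ((Fintype.equivFin _).symm a).2
    · simpa [τ] using ((Fintype.equivFin _).symm a).2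
  have hzero : ∀ x y, x.isLeft = y.isLeft → A (τ x) (τ y) = 0 := fun x y hxy ↦
    not_not.mp fun hne ↦ hc _ _ hne (by rw [hτ, hτ, hxy])
  refine ⟨_, _, τ, A.submatrix (τ ∘ Sum.inl) (τ ∘ Sum.inr), ?_⟩
  ext (a | a) (b | b)
  · exact hzero _ _ rfl
  · rfl
  · exact congrFun (congrFun hA _) _
  · exact hzero _ _ rfl

theorem Equiv.Perm.permMatrix_mul_mul_transpose [NonAssocSemiring R] [Fintype ι] [DecidableEq ι]
    (σ : Equiv.Perm ι) (A : Matrix ι ι R) :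
    σ.permMatrix R * A * (σ.permMatrix R)ᵀ = A.submatrix σ σ := by
  rw [PEquiv.toMatrix_toPEquiv_mul, transpose_permMatrix, PEquiv.mul_toMatrix_toPEquiv]
  rfl

theorem exists_permMatrix_conj_eq_reindex_fromBlocks_iff [NonAssocSemiring R] {n : ℕ}
    (A : Matrix (Fin n) (Fin n) R) :
    (∃ (m l : ℕ) (h : m + l = n) (σ : Equiv.Perm (Fin n)) (X : Matrix (Fin m) (Fin l) R),
      σ.permMatrix R * A * (σ.permMatrix R)ᵀ =
        reindex (finSumFinEquiv.trans (finCongr h)) (finSumFinEquiv.trans (finCongr h))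
          (fromBlocks 0 X Xᵀ 0)) ↔
    ∃ (m l : ℕ) (τ : Fin m ⊕ Fin l ≃ Fin n) (X : Matrix (Fin m) (Fin l) R),
      A.submatrix τ τ = fromBlocks 0 X Xᵀ 0 := by
  constructor
  · rintro ⟨m, l, h, σ, X, hσ⟩
    set e := finSumFinEquiv.trans (finCongr h)
    rw [σ.permMatrix_mul_mul_transpose, reindex_apply] at hσ
    refine ⟨m, l, e.trans σ, X, ?_⟩
    calc A.submatrix (e.trans σ) (e.trans σ) = (A.submatrix σ σ).submatrix e e := rfl
      _ = fromBlocks 0 X Xᵀ 0 := by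
        rw [hσ, submatrix_submatrix, e.symm_comp_self, submatrix_id_id]
  · rintro ⟨m, l, τ, X, hτ⟩
    have h : m + l = n := by simpa using Fintype.card_congr τ
    refine ⟨m, l, h, (finSumFinEquiv.trans (finCongr h)).symm.trans τ, X, ?_⟩
    rw [Equiv.Perm.permMatrix_mul_mul_transpose, reindex_apply, ← hτ, submatrix_submatrix]
    rfl

end BlockForm

section SignedMatrix

variable {ι : Type*} [Fintype ι] [DecidableEq ι] {A : Matrix ι ι ℝ}

theorem matAbs_diagonal_sign_mul (hnn : ∀ i j, 0 ≤ A i j) (c : ι → Bool) :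
    matAbs (diagonal (fun i ↦ if c i then 1 else -1) * A) = A := by
  ext i j
  by_cases hci : c i <;> simp [matAbs, hci, abs_of_nonneg (hnn i j)]

namespace IsTwoColoring

variable {c : ι → Bool}

theorem transpose_diagonal_sign_mul (hA : Aᵀ = A) (hc : IsTwoColoring A c) :
    (diagonal (fun i ↦ if c i then 1 else -1) * A)ᵀ =
      -(diagonal (fun i ↦ if c i then 1 else -1) * A) := by
  ext i j
  have hji : A j i = A i j := congrFun (congrFun hA i) j
  by_cases hij : A i j = 0
  · simp [hij, hji]
  · have := hc i j hij
    cases hci : c i <;> cases hcj : c j <;> simp_all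

theorem spec_diagonal_sign_mul (hA : Aᵀ = A) (hc : IsTwoColoring A c) :
    spec (diagonal (fun i ↦ if c i then 1 else -1) * A) = (spec A).map (Complex.I * ·) := by
  set d : ι → ℂ := fun i ↦ if c i then Complex.I else 1
  have hdd : diagonal d * diagonal d⁻¹ = 1 := by
    rw [diagonal_mul_diagonal, ← diagonal_one]
    congr 1
    ext i
    by_cases hci : c i <;> simp [d, hci]
  have hconj : (diagonal (fun i ↦ if c i then 1 else -1) * A).map Complex.ofReal =
      diagonal d⁻¹ * (Complex.I • A.map Complex.ofReal) * diagonal d := by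
    ext i j
    by_cases hij : A i j = 0
    · simp [hij]
    · have := hc i j hij
      cases hci : c i <;> cases hcj : c j <;> simp_all [d] <;> ring_nf <;> simp
  rw [spec, spec, hconj, mul_assoc, charpoly_mul_comm, mul_assoc, hdd, mul_one,
    (isHermitian_map_ofReal_of_transpose_eq hA).roots_charpoly_smul]

end IsTwoColoring

end SignedMatrix

section NonnegativeMatrix

variable {ι : Type*} [Fintype ι]

theorem le_mul_apply_of_nonneg {R : Type*} [Semiring R] [PartialOrder R] [IsOrderedRing R]
    {M N : Matrix ι ι R} (hM : ∀ i j, 0 ≤ M i j) (hN : ∀ i j, 0 ≤ N i j) (i j k : ι) :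
    M i j * N j k ≤ (M * N) i k :=
  Finset.single_le_sum (f := fun j ↦ M i j * N j k)
    (fun t _ ↦ mul_nonneg (hM i t) (hN t k)) (Finset.mem_univ j)

variable [DecidableEq ι] {A : Matrix ι ι ℝ}

theorem HasWalk.pow_apply_pos (hA : ∀ i j, 0 ≤ A i j) {i j : ι} {k : ℕ}
    (hw : HasWalk A i j k) : 0 < (A ^ k) i j := by
  induction k generalizing j with
  | zero =>
    obtain ⟨f, rfl, rfl, -⟩ := hw
    simp
  | succ k ih =>
    obtain ⟨f, hf0, hfk, hf⟩ := hw
    have hlast : 0 < A (f k) j := (hA _ _).lt_of_ne' (hfk ▸ hf k k.lt_succ_self)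
    have hinit : 0 < (A ^ k) i (f k) := ih ⟨f, hf0, rfl, fun t ht ↦ hf t (by omega)⟩
    rw [pow_succ]
    exact (mul_pos hinit hlast).trans_le
      (le_mul_apply_of_nonneg (pow_apply_nonneg hA k) hA _ _ _)

theorem exists_isTwoColoring_of_trace_pow_odd_eq_zero (hA : ∀ i j, 0 ≤ A i j)
    (hirr : MatIrreducible A) (hodd : ∀ k, Odd k → (A ^ k).trace = 0) :
    ∃ c, IsTwoColoring A c := by
  rcases isEmpty_or_nonempty ι with hι | ⟨⟨v⟩⟩
  · exact ⟨isEmptyElim, fun i ↦ isEmptyElim i⟩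
  have hpow := pow_apply_nonneg hA
  have hclosed : ∀ k, Odd k → (A ^ k) v v = 0 := fun k hk ↦
    (Finset.sum_eq_zero_iff_of_nonneg fun i _ ↦ hpow k i i).mp (hodd k hk) v (Finset.mem_univ v)
  choose K hK using hirr
  have hpos : ∀ i j, 0 < (A ^ K i j) i j := fun i j ↦ (hK i j).pow_apply_pos hA
  have heven : ∀ a b i, 0 < (A ^ a) v i → 0 < (A ^ b) i v → Even (a + b) := by
    intro a b i ha hb
    by_contra hab
    refine (hclosed _ (Nat.not_even_iff_odd.mp hab)).not_gt ?_
    rw [pow_add]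
    exact (mul_pos ha hb).trans_le (le_mul_apply_of_nonneg (hpow a) (hpow b) _ _ _)
  refine ⟨fun i ↦ decide (Even (K v i)), fun i j hij hc ↦ ?_⟩
  have hstep : 0 < (A ^ (K v i + 1)) v j := by
    rw [pow_succ]
    exact (mul_pos (hpos v i) ((hA i j).lt_of_ne' hij)).trans_le
      (le_mul_apply_of_nonneg (hpow _) hA _ _ _)
  have h1 := heven _ _ _ hstep (hpos j v)
  have h2 := heven _ _ _ (hpos v j) (hpos j v)
  simp only [decide_eq_decide] at hc
  rw [Nat.even_add, Nat.even_add_one] at h1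
  rw [Nat.even_add] at h2
  tauto

end NonnegativeMatrix

theorem stmt_13 {n : ℕ} (A : Matrix (Fin n) (Fin n) ℝ) (hsym : Aᵀ = A)
    (hnn : ∀ i j, 0 ≤ A i j) (hirr : MatIrreducible A) :
    (∃ B : Matrix (Fin n) (Fin n) ℝ, Bᵀ = -B ∧ matAbs B = A ∧
        spec B = (spec A).map (fun z => Complex.I * z)) ↔
    (∃ (m l : ℕ) (h : m + l = n) (σ : Equiv.Perm (Fin n)) (X : Matrix (Fin m) (Fin l) ℝ),
      σ.permMatrix ℝ * A * (σ.permMatrix ℝ)ᵀ =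
        Matrix.reindex (finSumFinEquiv.trans (finCongr h)) (finSumFinEquiv.trans (finCongr h))
          (Matrix.fromBlocks 0 X Xᵀ 0)) := by
  rw [exists_permMatrix_conj_eq_reindex_fromBlocks_iff]
  constructor
  · rintro ⟨B, hB, -, hspec⟩
    obtain ⟨c, hc⟩ := exists_isTwoColoring_of_trace_pow_odd_eq_zero hnn hirr
      fun k hk ↦ trace_pow_eq_zero_of_spec_eq_I_smul hsym hB hspec hk
    exact hc.exists_submatrix_eq_fromBlocks hsym
  · rintro ⟨m, l, τ, X, hτ⟩
    have hc := IsTwoColoring.of_submatrix_eq_fromBlocks τ hτ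
    exact ⟨_, hc.transpose_diagonal_sign_mul hsym, matAbs_diagonal_sign_mul hnn _,
      hc.spec_diagonal_sign_mul hsym⟩
end

section
/- Let A = [[0, X],[X^T, 0]] be an irreducible nonnegative symmetric real matrix (with square zero diagonal blocks), let à = [[0, X],[−X^T, 0]], and let B be a real skew-symmetric matrix with |B| = A. Then sp(B) = i·sp(A) if and only if B is {−1,1}-diagonally similar to Ã. -/
open Matrix

/-!
Write `B = [[0, Y], [-Yᵀ, 0]]`. Conjugating by `diag(1, i)` gives `sp(B) = i·sp(C)` with
`C = [[0, Y], [Yᵀ, 0]]`, and likewise `sp(Ã) = i·sp(A)`, so it suffices to show that a matrix `C`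
with `|C| = A` is cospectral with `A` only if `C = DAD` for a signature matrix `D` (the converse
being invariance of the spectrum under similarity).
Let `ρ` be the largest eigenvalue of `A`; it is an eigenvalue of `C`, with eigenvector `v`. Then
`ρ‖v‖² = vᵀCv ≤ |v|ᵀA|v| ≤ ρ‖v‖²`, so `|v|` is a Perron vector of `A`, positive by
irreducibility, and every `v_p C_pq v_q ≤ |v_p| A_pq |v_q|` is an equality, i.e.
`C_pq = sign(v_p) sign(v_q) A_pq`.
-/

open Polynomial

lemma charpoly_smul {ι K : Type*} [Fintype ι] [DecidableEq ι] [Field K] [Infinite K] {c : K}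
    (hc : c ≠ 0) (M : Matrix ι ι K) :
    (c • M).charpoly = M.charpoly.scaleRoots c := by
  refine Polynomial.funext fun x => ?_
  obtain ⟨y, rfl⟩ : ∃ y, c * y = x := ⟨c⁻¹ * x, mul_inv_cancel_left₀ hc x⟩
  have : scalar ι (c * y) - c • M = c • (scalar ι y - M) := by
    ext i j
    by_cases h : i = j <;> simp [h, mul_sub]
  rw [scaleRoots_eval_mul, eval_charpoly, eval_charpoly, this, det_smul,
    charpoly_natDegree_eq_dim, Fintype.card]

lemma exists_mulVec_eq_smul_of_mem_spectrum {ι K : Type*} [Fintype ι] [DecidableEq ι] [Field K]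
    {M : Matrix ι ι K} {μ : K} (h : μ ∈ spectrum K M) : ∃ v ≠ 0, M *ᵥ v = μ • v := by
  rw [mem_spectrum_iff_isRoot_charpoly, IsRoot, eval_charpoly, ← exists_mulVec_eq_zero_iff] at h
  obtain ⟨v, hv, hMv⟩ := h
  refine ⟨v, hv, ?_⟩
  rw [sub_mulVec, sub_eq_zero, scalar_apply, ← smul_one_eq_diagonal, smul_mulVec,
    one_mulVec] at hMv
  exact hMv.symm

section Spectrum

variable {ι : Type*} [Fintype ι] [DecidableEq ι]

lemma spec_eq_roots_map (M : Matrix ι ι ℝ) :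
    spec M = (M.charpoly.map Complex.ofRealHom).roots := by
  rw [spec, ← charpoly_map]
  rfl

lemma ofReal_mem_spec_iff (M : Matrix ι ι ℝ) (x : ℝ) : (x : ℂ) ∈ spec M ↔ x ∈ spectrum ℝ M := by
  rw [spec_eq_roots_map, mem_roots ((charpoly_monic M).map _).ne_zero, IsRoot, eval_map,
    ← Complex.ofRealHom_eq_coe, eval₂_hom, map_eq_zero, mem_spectrum_iff_isRoot_charpoly]
  rfl

lemma spec_inv_mul_mul_of_isUnit {P : Matrix ι ι ℝ} (hP : IsUnit P) (M : Matrix ι ι ℝ) :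
    spec (P⁻¹ * M * P) = spec M := by
  rw [spec_eq_roots_map, spec_eq_roots_map, ← hP.unit_spec, charpoly_units_conj']

end Spectrum

lemma spec_fromBlocks_neg_transpose {m n : Type*} [Fintype m] [Fintype n] [DecidableEq m]
    [DecidableEq n] (Y : Matrix m n ℝ) :
    spec (fromBlocks 0 Y (-Yᵀ) 0) = (spec (fromBlocks 0 Y Yᵀ 0)).map (Complex.I * ·) := by
  set E : Matrix (m ⊕ n) (m ⊕ n) ℂ := diagonal (Sum.elim 1 fun _ => Complex.I)
  set E' : Matrix (m ⊕ n) (m ⊕ n) ℂ := diagonal (Sum.elim 1 fun _ => -Complex.I)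
  have hE'E : E' * E = 1 := by
    rw [diagonal_mul_diagonal, ← diagonal_one]
    congr 1
    ext (i | i) <;> simp
  have hconj : E * (Complex.I • (fromBlocks 0 Y Yᵀ 0).map Complex.ofReal) * E' =
      (fromBlocks 0 Y (-Yᵀ) 0).map Complex.ofReal := by
    ext (i | i) (j | j) <;> simp [E, E', mul_diagonal, diagonal_mul, mul_comm Complex.I, mul_assoc]
  rw [spec, spec, ← hconj, charpoly_mul_comm, ← mul_assoc, hE'E, one_mul,
    charpoly_smul Complex.I_ne_zero, roots_scaleRoots _ (isUnit_iff_ne_zero.mpr Complex.I_ne_zero)]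

section Rayleigh

variable {ι : Type*} [Fintype ι] [DecidableEq ι] {A : Matrix ι ι ℝ} {ρ : ℝ}

lemma Matrix.IsHermitian.exists_mem_spectrum_forall_le [Nonempty ι] (hA : A.IsHermitian) :
    ∃ ρ ∈ spectrum ℝ A, ∀ μ ∈ spectrum ℝ A, μ ≤ ρ := by
  rw [hA.spectrum_real_eq_range_eigenvalues]
  obtain ⟨i, hi⟩ := Finite.exists_max hA.eigenvalues
  exact ⟨_, ⟨i, rfl⟩, by rintro _ ⟨j, rfl⟩; exact hi j⟩

lemma posSemidef_smul_one_sub (hA : A.IsHermitian) (hρ : ∀ μ ∈ spectrum ℝ A, μ ≤ ρ) :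
    (ρ • 1 - A).PosSemidef := by
  rw [posSemidef_iff_isHermitian_and_spectrum_nonneg, ← Algebra.algebraMap_eq_smul_one,
    ← spectrum.singleton_sub_eq]
  refine ⟨(IsSelfAdjoint.algebraMap _ (.all ρ)).sub hA, ?_⟩
  rintro _ ⟨_, rfl, μ, hμ, rfl⟩
  exact sub_nonneg.mpr (hρ μ hμ)

lemma dotProduct_mulVec_le_of_spectrum_le (hA : A.IsHermitian) (hρ : ∀ μ ∈ spectrum ℝ A, μ ≤ ρ)
    (u : ι → ℝ) : u ⬝ᵥ A *ᵥ u ≤ ρ * (u ⬝ᵥ u) := by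
  have := (posSemidef_smul_one_sub hA hρ).dotProduct_mulVec_nonneg u
  rw [star_trivial, sub_mulVec, smul_mulVec, one_mulVec, dotProduct_sub, dotProduct_smul,
    smul_eq_mul] at this
  linarith

lemma mulVec_eq_smul_of_spectrum_le (hA : A.IsHermitian) (hρ : ∀ μ ∈ spectrum ℝ A, μ ≤ ρ)
    {u : ι → ℝ} (hu : ρ * (u ⬝ᵥ u) ≤ u ⬝ᵥ A *ᵥ u) : A *ᵥ u = ρ • u := by
  have hle := dotProduct_mulVec_le_of_spectrum_le hA hρ u
  have := (posSemidef_smul_one_sub hA hρ).dotProduct_mulVec_zero_iff u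
  rw [star_trivial, sub_mulVec, smul_mulVec, one_mulVec, dotProduct_sub, dotProduct_smul,
    smul_eq_mul, sub_eq_zero, sub_eq_zero] at this
  exact (this.mp (by linarith)).symm

end Rayleigh

section Irreducible

variable {ι : Type*} {A : Matrix ι ι ℝ}

lemma HasWalk.of_backward_closed {P : ι → Prop} (hP : ∀ p r, A p r ≠ 0 → P r → P p) :
    ∀ {k : ℕ} {p q : ι}, HasWalk A p q k → P q → P p
  | 0, _, _, ⟨f, h0, hk, _⟩, hq => by rwa [← h0, hk]
  | k + 1, _, _, ⟨f, h0, hk, harc⟩, hq => by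
    subst h0
    refine hP (f 0) (f 1) (harc 0 k.succ_pos) (of_backward_closed hP (k := k) ?_ hq)
    exact ⟨fun t => f (t + 1), rfl, hk, fun t ht => harc (t + 1) (by omega)⟩

lemma MatIrreducible.forall_of_backward_closed (hA : MatIrreducible A) {P : ι → Prop}
    (hP : ∀ p r, A p r ≠ 0 → P r → P p) {q : ι} (hq : P q) (p : ι) : P p :=
  (hA p q).elim fun _ hw => hw.of_backward_closed hP hq

lemma MatIrreducible.pos_of_mulVec_eq_smul [Fintype ι] (hA : MatIrreducible A)
    (hnn : ∀ p q, 0 ≤ A p q) {w : ι → ℝ} {ρ : ℝ} (hw : ∀ p, 0 ≤ w p) (hw0 : w ≠ 0)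
    (hAw : A *ᵥ w = ρ • w) (p : ι) : 0 < w p := by
  obtain ⟨q, hq⟩ := Function.ne_iff.mp hw0
  refine hA.forall_of_backward_closed (P := (0 < w ·)) (fun p r hpr hr => ?_)
    ((hw q).lt_of_ne' hq) p
  have hle : A p r * w r ≤ (A *ᵥ w) p :=
    Finset.single_le_sum (fun q _ => mul_nonneg (hnn p q) (hw q)) (Finset.mem_univ r)
  rw [hAw, Pi.smul_apply, smul_eq_mul] at hle
  have hpos : 0 < ρ * w p := (mul_pos ((hnn p r).lt_of_ne' hpr) hr).trans_le hle
  exact (hw p).lt_of_ne' fun h => by simp [h] at hpos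

end Irreducible

lemma exists_sign_mul_abs (x : ℝ) : ∃ s : ℝ, (s = 1 ∨ s = -1) ∧ x = s * |x| := by
  rcases abs_choice x with h | h
  · exact ⟨1, .inl rfl, by rw [h, one_mul]⟩
  · exact ⟨-1, .inr rfl, by rw [h, neg_one_mul, neg_neg]⟩

section QuadraticForm

variable {ι : Type*} (C : Matrix ι ι ℝ) (v : ι → ℝ)

lemma mul_mul_le_abs (p q : ι) : v p * C p q * v q ≤ |v| p * matAbs C p q * |v| q := by
  simp only [Pi.abs_apply, matAbs, ← abs_mul]
  exact le_abs_self _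

variable [Fintype ι]

lemma dotProduct_mulVec_eq_sum : v ⬝ᵥ C *ᵥ v = ∑ p, ∑ q, v p * C p q * v q := by
  simp [dotProduct, mulVec, Finset.mul_sum, mul_assoc]

lemma dotProduct_mulVec_le_abs : v ⬝ᵥ C *ᵥ v ≤ |v| ⬝ᵥ matAbs C *ᵥ |v| := by
  rw [dotProduct_mulVec_eq_sum, dotProduct_mulVec_eq_sum]
  exact Finset.sum_le_sum fun p _ => Finset.sum_le_sum fun q _ => mul_mul_le_abs C v p q

lemma mul_mul_eq_abs_of_dotProduct_mulVec_abs_le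
    (h : |v| ⬝ᵥ matAbs C *ᵥ |v| ≤ v ⬝ᵥ C *ᵥ v) (p q : ι) :
    v p * C p q * v q = |v| p * matAbs C p q * |v| q := by
  have hrow : ∀ p ∈ Finset.univ, ∑ q, v p * C p q * v q ≤ ∑ q, |v| p * matAbs C p q * |v| q :=
    fun p _ => Finset.sum_le_sum fun q _ => mul_mul_le_abs C v p q
  rw [dotProduct_mulVec_eq_sum, dotProduct_mulVec_eq_sum] at h
  have hp := (Finset.sum_eq_sum_iff_of_le hrow).mp ((Finset.sum_le_sum hrow).antisymm h) p
    (Finset.mem_univ p)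
  exact (Finset.sum_eq_sum_iff_of_le fun q _ => mul_mul_le_abs C v p q).mp hp q
    (Finset.mem_univ q)

end QuadraticForm

section SignSimilar

variable {ι : Type*} [Fintype ι] [DecidableEq ι]

lemma diagonal_mul_self_of_sign {d : ι → ℝ} (hd : ∀ i, d i = 1 ∨ d i = -1) :
    diagonal d * diagonal d = 1 := by
  rw [diagonal_mul_diagonal, ← diagonal_one]
  congr 1
  ext i
  rcases hd i with h | h <;> simp [h]

lemma diagSignSimilar_iff {B B' : Matrix ι ι ℝ} :
    DiagSignSimilar B B' ↔
      ∃ d : ι → ℝ, (∀ i, d i = 1 ∨ d i = -1) ∧ ∀ p q, B' p q = d p * d q * B p q := by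
  refine exists_congr fun d => and_congr_right fun hd => ?_
  rw [inv_eq_left_inv (diagonal_mul_self_of_sign hd), ← Matrix.ext_iff]
  refine forall₂_congr fun p q => ?_
  rw [mul_diagonal, diagonal_mul, mul_right_comm, mul_comm (d p)]

lemma DiagSignSimilar.spec_eq {B B' : Matrix ι ι ℝ} (h : DiagSignSimilar B B') :
    spec B' = spec B := by
  obtain ⟨d, hd, rfl⟩ := h
  exact spec_inv_mul_mul_of_isUnit (IsUnit.of_mul_eq_one _ (diagonal_mul_self_of_sign hd)) B

end SignSimilar

section SpecEq

variable {ι : Type*} [Fintype ι] [DecidableEq ι] {A C : Matrix ι ι ℝ}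

theorem exists_sign_of_spec_eq (hA : A.IsHermitian) (hnn : ∀ p q, 0 ≤ A p q)
    (hirr : MatIrreducible A) (habs : matAbs C = A) (hspec : spec C = spec A) :
    ∃ d : ι → ℝ, (∀ i, d i = 1 ∨ d i = -1) ∧ ∀ p q, C p q = d p * d q * A p q := by
  rcases isEmpty_or_nonempty ι with hι | hι
  · exact ⟨1, fun _ => .inl rfl, fun p => isEmptyElim p⟩
  obtain ⟨ρ, hρA, hρ⟩ := hA.exists_mem_spectrum_forall_le
  have hρC : ρ ∈ spectrum ℝ C :=
    (ofReal_mem_spec_iff C ρ).mp (hspec ▸ (ofReal_mem_spec_iff A ρ).mpr hρA)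
  obtain ⟨v, hv0, hCv⟩ := exists_mulVec_eq_smul_of_mem_spectrum hρC
  have hvv : ρ * (|v| ⬝ᵥ |v|) = v ⬝ᵥ C *ᵥ v := by
    rw [hCv, dotProduct_smul, smul_eq_mul]
    exact congrArg _ (Finset.sum_congr rfl fun p _ => abs_mul_abs_self (v p))
  have hle : ρ * (|v| ⬝ᵥ |v|) ≤ |v| ⬝ᵥ A *ᵥ |v| := habs ▸ hvv ▸ dotProduct_mulVec_le_abs C v
  have hpos : ∀ p, 0 < |v p| :=
    hirr.pos_of_mulVec_eq_smul hnn (fun p => abs_nonneg _) (by simpa [funext_iff] using hv0)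
      (mulVec_eq_smul_of_spectrum_le hA hρ hle)
  have heq := mul_mul_eq_abs_of_dotProduct_mulVec_abs_le C v
    (habs ▸ (dotProduct_mulVec_le_of_spectrum_le hA hρ |v|).trans_eq hvv)
  choose d hd hvd using fun p => exists_sign_mul_abs (v p)
  refine ⟨d, hd, fun p q => mul_right_cancel₀ (mul_pos (hpos p) (hpos q)).ne' ?_⟩
  have hp : d p * d p = 1 := by rcases hd p with h | h <;> simp [h]
  have hq : d q * d q = 1 := by rcases hd q with h | h <;> simp [h]
  have h : d p * |v p| * C p q * (d q * |v q|) = |v p| * A p q * |v q| := by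
    rw [← hvd p, ← hvd q, heq, habs, Pi.abs_apply, Pi.abs_apply]
  linear_combination (d p * d q) * h - C p q * |v p| * |v q| * hp -
    C p q * |v p| * |v q| * d p * d p * hq

theorem spec_eq_iff_diagSignSimilar (hA : A.IsHermitian) (hnn : ∀ p q, 0 ≤ A p q)
    (hirr : MatIrreducible A) (habs : matAbs C = A) : spec C = spec A ↔ DiagSignSimilar A C :=
  ⟨fun h => diagSignSimilar_iff.mpr (exists_sign_of_spec_eq hA hnn hirr habs h),
    DiagSignSimilar.spec_eq⟩

end SpecEq

section Blocks

variable {m n : Type*}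

lemma eq_fromBlocks_of_transpose_eq_neg_of_matAbs_eq {B : Matrix (m ⊕ n) (m ⊕ n) ℝ}
    {X : Matrix m n ℝ} {Y : Matrix n m ℝ} (hskew : Bᵀ = -B) (habs : matAbs B = fromBlocks 0 X Y 0) :
    B = fromBlocks 0 B.toBlocks₁₂ (-B.toBlocks₁₂ᵀ) 0 := by
  ext (i | i) (j | j)
  · simpa [matAbs] using congr_fun₂ habs (.inl i) (.inl j)
  · rfl
  · simpa [toBlocks₁₂] using congr_fun₂ hskew (.inl j) (.inr i)
  · simpa [matAbs] using congr_fun₂ habs (.inr i) (.inr j)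

lemma matAbs_fromBlocks_neg_transpose (Y : Matrix m n ℝ) :
    matAbs (fromBlocks 0 Y (-Yᵀ) 0) = matAbs (fromBlocks 0 Y Yᵀ 0) := by
  ext (i | i) (j | j) <;> simp [matAbs]

lemma diagSignSimilar_fromBlocks_neg_transpose_iff [Fintype m] [Fintype n] [DecidableEq m]
    [DecidableEq n] (X Y : Matrix m n ℝ) :
    DiagSignSimilar (fromBlocks 0 X (-Xᵀ) 0) (fromBlocks 0 Y (-Yᵀ) 0) ↔
      DiagSignSimilar (fromBlocks 0 X Xᵀ 0) (fromBlocks 0 Y Yᵀ 0) := by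
  simp only [diagSignSimilar_iff, Sum.forall, fromBlocks_apply₁₁, fromBlocks_apply₁₂,
    fromBlocks_apply₂₁, fromBlocks_apply₂₂, Matrix.neg_apply, transpose_apply, mul_neg, neg_inj]

end Blocks

theorem stmt_14 {m l : ℕ} (X : Matrix (Fin m) (Fin l) ℝ)
    (hnn : ∀ i j, 0 ≤ X i j)
    (hirr : MatIrreducible (Matrix.fromBlocks 0 X Xᵀ (0 : Matrix (Fin l) (Fin l) ℝ)))
    (B : Matrix (Fin m ⊕ Fin l) (Fin m ⊕ Fin l) ℝ)
    (hskew : Bᵀ = -B)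
    (habs : matAbs B = Matrix.fromBlocks 0 X Xᵀ 0) :
    spec B = (spec (Matrix.fromBlocks 0 X Xᵀ (0 : Matrix (Fin l) (Fin l) ℝ))).map
        (fun z => Complex.I * z) ↔
    DiagSignSimilar (Matrix.fromBlocks 0 X (-Xᵀ) 0) B := by
  have hB := eq_fromBlocks_of_transpose_eq_neg_of_matAbs_eq hskew habs
  have hC : matAbs (fromBlocks 0 B.toBlocks₁₂ B.toBlocks₁₂ᵀ 0) = fromBlocks 0 X Xᵀ 0 := by
    rw [← matAbs_fromBlocks_neg_transpose, ← hB, habs]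
  have hA : (fromBlocks 0 X Xᵀ (0 : Matrix (Fin l) (Fin l) ℝ)).IsHermitian :=
    isHermitian_zero.fromBlocks (conjTranspose_eq_transpose_of_trivial X) isHermitian_zero
  have hAnn : ∀ p q, 0 ≤ fromBlocks 0 X Xᵀ (0 : Matrix (Fin l) (Fin l) ℝ) p q := by
    rintro (i | i) (j | j) <;> simp [hnn]
  rw [hB, spec_fromBlocks_neg_transpose,
    (Multiset.map_injective (mul_right_injective₀ Complex.I_ne_zero)).eq_iff,
    diagSignSimilar_fromBlocks_neg_transpose_iff]
  exact spec_eq_iff_diagSignSimilar hA hAnn hirr hC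
end
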